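/- Let c be an admissible edge weighting of Q_n with c(e) ≠ 0 for every edge e of Q_n. Then there exists a point t = (t_0,…,t_{n-1}) of the standard simplex Δ_{n-1} such that |c({i, i#k})| = √(t_k) for every even vertex i of Q_n and every k < n. -/

import Mathlib

open scoped Classical

noncomputable section

/-- Adjacency in the hypercube `Q_n`: differ in exactly one coordinate. -/
def hcAdj {n : ℕ} (x y : Fin n → Bool) : Prop :=
  (Finset.univ.filter (fun k => x k ≠ y k)).card = 1

/-- Flip the `k`-th coordinate. -/
def hcFlip {n : ℕ} (x : Fin n → Bool) (k : Fin n) : Fin n → Bool :=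
  Function.update x k (!x k)

/-- A vertex of `Q_n` is even if it has an even number of coordinates equal to `true`. -/
def hcEven {n : ℕ} (x : Fin n → Bool) : Prop :=
  (Finset.univ.filter (fun k => x k = true)).card % 2 = 0

/-- `i` belongs to `U_n(c)`: `i` is even and incident to an edge of nonzero weight. -/
def inU {n : ℕ} (c : (Fin n → Bool) → (Fin n → Bool) → ℂ) (i : Fin n → Bool) : Prop :=
  hcEven i ∧ ∃ j, hcAdj i j ∧ c i j ≠ 0

/-- `j` belongs to `V_n(c)`: `j` is odd and incident to an edge of nonzero weight. -/
def inV {n : ℕ} (c : (Fin n → Bool) → (Fin n → Bool) → ℂ) (j : Fin n → Bool) : Prop :=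
  ¬ hcEven j ∧ ∃ i, hcAdj i j ∧ c i j ≠ 0

/-- An edge weighting `c` of `Q_n` (with `c i j` the weight of the edge `{i,j}`,
`i` even, `j` odd) is admissible. -/
def Admissible {n : ℕ} (c : (Fin n → Bool) → (Fin n → Bool) → ℂ) : Prop :=
  (∀ j₁, inV c j₁ → ∀ j₂, inV c j₂ →
    ∑ i ∈ Finset.univ.filter (fun i => hcEven i ∧ hcAdj i j₁ ∧ hcAdj i j₂),
      c i j₁ * (starRingEnd ℂ) (c i j₂) = if j₁ = j₂ then 1 else 0) ∧
  (∀ i₁, inU c i₁ → ∀ i₂, inU c i₂ →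
    ∑ j ∈ Finset.univ.filter (fun j => ¬ hcEven j ∧ hcAdj i₁ j ∧ hcAdj i₂ j),
      c i₁ j * (starRingEnd ℂ) (c i₂ j) = if i₁ = i₂ then 1 else 0)

lemma hcFlip_apply {n : ℕ} (x : Fin n → Bool) (k m : Fin n) :
    hcFlip x k m = if m = k then !x k else x m := by
  simp [hcFlip, Function.update_apply]

lemma hcFlip_self {n : ℕ} (x : Fin n → Bool) (k : Fin n) : hcFlip x k k = !x k := by
  simp [hcFlip_apply]

lemma hcFlip_ne {n : ℕ} (x : Fin n → Bool) {k m : Fin n} (h : m ≠ k) : hcFlip x k m = x m := by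
  simp [hcFlip_apply, h]

lemma hcFlip_flip {n : ℕ} (x : Fin n → Bool) (k : Fin n) : hcFlip (hcFlip x k) k = x := by
  funext m
  by_cases h : m = k
  · subst h; simp [hcFlip_self]
  · simp [hcFlip_ne _ h]

lemma hcFlip_comm {n : ℕ} (x : Fin n → Bool) {k l : Fin n} (h : k ≠ l) :
    hcFlip (hcFlip x k) l = hcFlip (hcFlip x l) k := by
  funext m
  by_cases hk : m = k
  · subst hk
    rw [hcFlip_ne _ h, hcFlip_self, hcFlip_self, hcFlip_ne _ h]
  · by_cases hl : m = l
    · subst hl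
      rw [hcFlip_self, hcFlip_ne _ h.symm, hcFlip_ne _ h.symm, hcFlip_self]
    · rw [hcFlip_ne _ hl, hcFlip_ne _ hk, hcFlip_ne _ hk, hcFlip_ne _ hl]

lemma hcAdj_flip {n : ℕ} (x : Fin n → Bool) (k : Fin n) : hcAdj x (hcFlip x k) := by
  have : (Finset.univ.filter (fun m => x m ≠ hcFlip x k m)) = {k} := by
    ext m
    by_cases h : m = k
    · subst h; simp [hcFlip_self]
    · simp [hcFlip_ne _ h, h]
  rw [hcAdj, this]; simp

lemma hcAdj_iff {n : ℕ} {x y : Fin n → Bool} : hcAdj x y ↔ ∃ k, y = hcFlip x k := by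
  constructor
  · intro h
    rw [hcAdj, Finset.card_eq_one] at h
    obtain ⟨k, hk⟩ := h
    refine ⟨k, funext fun m => ?_⟩
    by_cases hm : m = k
    · subst hm
      have : x m ≠ y m := by
        have : m ∈ Finset.univ.filter (fun j => x j ≠ y j) := hk ▸ Finset.mem_singleton_self m
        simpa using this
      rw [hcFlip_self]
      revert this; cases x m <;> cases y m <;> simp
    · have : m ∉ Finset.univ.filter (fun j => x j ≠ y j) := by
        rw [hk]; simp [hm]
      simp at this
      rw [hcFlip_ne _ hm, this]
  · rintro ⟨k, rfl⟩; exact hcAdj_flip x k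

lemma hcAdj_symm {n : ℕ} {x y : Fin n → Bool} (h : hcAdj x y) : hcAdj y x := by
  rw [hcAdj] at *
  convert h using 2
  ext m; simp [ne_comm]

lemma hcEven_flip {n : ℕ} (x : Fin n → Bool) (k : Fin n) :
    ¬ hcEven (hcFlip x k) ↔ hcEven x := by
  unfold hcEven
  rcases Bool.eq_false_or_eq_true (x k) with h | h
  · have : Finset.univ.filter (fun m => hcFlip x k m = true)
        = (Finset.univ.filter (fun m => x m = true)).erase k := by
      ext m
      by_cases hm : m = k
      · subst hm; simp [hcFlip_self, h]
      · simp [hcFlip_ne _ hm, hm]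
    rw [this, Finset.card_erase_of_mem (by simp [h])]
    have hpos : 0 < (Finset.univ.filter (fun m => x m = true)).card :=
      Finset.card_pos.2 ⟨k, by simp [h]⟩
    omega
  · have : Finset.univ.filter (fun m => hcFlip x k m = true)
        = insert k (Finset.univ.filter (fun m => x m = true)) := by
      ext m
      by_cases hm : m = k
      · subst hm; simp [hcFlip_self, h]
      · simp [hcFlip_ne _ hm, hm]
    rw [this, Finset.card_insert_of_notMem (by simp [h])]
    omega

lemma hcEven_flip' {n : ℕ} (x : Fin n → Bool) (k : Fin n) :
    hcEven (hcFlip x k) ↔ ¬ hcEven x := by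
  have := hcEven_flip (hcFlip x k) k
  rw [hcFlip_flip] at this
  tauto

lemma hcFlip_injective {n : ℕ} (x : Fin n → Bool) {k l : Fin n} (h : k ≠ l) :
    hcFlip x k ≠ hcFlip x l := by
  intro he
  have : hcFlip x k k = hcFlip x l k := by rw [he]
  rw [hcFlip_self, hcFlip_ne _ h] at this
  simp at this

lemma common_neighbors {n : ℕ} (x : Fin n → Bool) {k l : Fin n} (hkl : k ≠ l) :
    Finset.univ.filter (fun z => hcAdj x z ∧ hcAdj (hcFlip (hcFlip x k) l) z)
      = {hcFlip x k, hcFlip x l} := by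
  set y := hcFlip (hcFlip x k) l with hy
  ext z
  simp only [Finset.mem_filter, Finset.mem_univ, true_and, Finset.mem_insert,
    Finset.mem_singleton]
  constructor
  · rintro ⟨h1, h2⟩
    obtain ⟨a, rfl⟩ := hcAdj_iff.1 h1
    by_cases hak : a = k
    · exact Or.inl (by rw [hak])
    by_cases hal : a = l
    · exact Or.inr (by rw [hal])
    exfalso
    have hset : Finset.univ.filter (fun m => y m ≠ hcFlip x a m) = {k, l, a} := by
      ext m
      simp only [Finset.mem_filter, Finset.mem_univ, true_and, Finset.mem_insert,
        Finset.mem_singleton]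
      constructor
      · intro hm
        by_contra hc
        push_neg at hc
        obtain ⟨h1', h2', h3'⟩ := hc
        apply hm
        rw [hy, hcFlip_ne _ h2', hcFlip_ne _ h1', hcFlip_ne _ h3']
      · rintro (rfl | rfl | rfl)
        · show hcFlip (hcFlip x m) l m ≠ hcFlip x a m
          rw [hcFlip_ne _ hkl, hcFlip_self, hcFlip_ne _ (Ne.symm hak)]
          simp
        · show hcFlip (hcFlip x k) m m ≠ hcFlip x a m
          rw [hcFlip_self, hcFlip_ne _ (Ne.symm hkl), hcFlip_ne _ (Ne.symm hal)]
          simp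
        · show hcFlip (hcFlip x k) l m ≠ hcFlip x m m
          rw [hcFlip_ne _ hal, hcFlip_ne _ hak, hcFlip_self]
          simp
    rw [hcAdj, hset] at h2
    have : ({k, l, a} : Finset (Fin n)).card = 3 := by
      rw [Finset.card_insert_of_notMem (by simp [hkl, hak, Ne.symm hak]),
        Finset.card_insert_of_notMem (by simp [Ne.symm hal]), Finset.card_singleton]
    omega
  · rintro (rfl | rfl)
    · refine ⟨hcAdj_flip x k, ?_⟩
      have : hcFlip x k = hcFlip y l := by rw [hy, hcFlip_flip]
      rw [this]; exact hcAdj_flip y l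
    · refine ⟨hcAdj_flip x l, ?_⟩
      have : hcFlip x l = hcFlip y k := by
        rw [hy, hcFlip_comm x hkl, hcFlip_flip]
      rw [this]; exact hcAdj_flip y k


lemma hcAdj_comm {n : ℕ} {x y : Fin n → Bool} : hcAdj x y ↔ hcAdj y x :=
  ⟨hcAdj_symm, hcAdj_symm⟩

lemma odd_of_adj {n : ℕ} {x j : Fin n → Bool} (hx : hcEven x) (h : hcAdj x j) :
    ¬ hcEven j := by
  obtain ⟨a, rfl⟩ := hcAdj_iff.1 h
  exact (hcEven_flip x a).2 hx

lemma even_of_adj {n : ℕ} {x i : Fin n → Bool} (hx : ¬ hcEven x) (h : hcAdj x i) :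
    hcEven i := by
  obtain ⟨a, rfl⟩ := hcAdj_iff.1 h
  by_contra hc
  exact hx ((hcEven_flip x a).1 hc)

lemma filter_common_V {n : ℕ} (x : Fin n → Bool) (hx : hcEven x) {k l : Fin n} (hkl : k ≠ l) :
    Finset.univ.filter
        (fun j => ¬ hcEven j ∧ hcAdj x j ∧ hcAdj (hcFlip (hcFlip x k) l) j)
      = {hcFlip x k, hcFlip x l} := by
  rw [← common_neighbors x hkl]
  apply Finset.filter_congr
  intro j _
  constructor
  · rintro ⟨_, h1, h2⟩; exact ⟨h1, h2⟩
  · rintro ⟨h1, h2⟩; exact ⟨odd_of_adj hx h1, h1, h2⟩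

lemma filter_common_U {n : ℕ} (x : Fin n → Bool) (hx : ¬ hcEven x) {k l : Fin n} (hkl : k ≠ l) :
    Finset.univ.filter
        (fun i => hcEven i ∧ hcAdj i x ∧ hcAdj i (hcFlip (hcFlip x k) l))
      = {hcFlip x k, hcFlip x l} := by
  rw [← common_neighbors x hkl]
  apply Finset.filter_congr
  intro i _
  constructor
  · rintro ⟨_, h1, h2⟩; exact ⟨hcAdj_symm h1, hcAdj_symm h2⟩
  · rintro ⟨h1, h2⟩; exact ⟨even_of_adj hx h1, hcAdj_symm h1, hcAdj_symm h2⟩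

lemma flip_ne_self {n : ℕ} (x : Fin n → Bool) (k : Fin n) : x ≠ hcFlip x k := by
  intro he
  have : x k = hcFlip x k k := by rw [← he]
  rw [hcFlip_self] at this
  simp at this

section withC
variable {n : ℕ} (c : (Fin n → Bool) → (Fin n → Bool) → ℂ)

/-- membership in U for any even vertex, given `hn` and `hnz`. -/
lemma even_inU (hn : 1 ≤ n) (hnz : ∀ i j, hcEven i → hcAdj i j → c i j ≠ 0)
    {i : Fin n → Bool} (hi : hcEven i) : inU c i :=
  ⟨hi, hcFlip i ⟨0, hn⟩, hcAdj_flip i _, hnz _ _ hi (hcAdj_flip i _)⟩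

lemma odd_inV (hn : 1 ≤ n) (hnz : ∀ i j, hcEven i → hcAdj i j → c i j ≠ 0)
    {j : Fin n → Bool} (hj : ¬ hcEven j) : inV c j := by
  refine ⟨hj, hcFlip j ⟨0, hn⟩, hcAdj_symm (hcAdj_flip j _), ?_⟩
  exact hnz _ _ ((hcEven_flip' j _).2 hj) (hcAdj_symm (hcAdj_flip j _))

/-- Key step: a double flip at `{k, l}` preserves the magnitude of the edge
weight in direction `k`. -/
lemma key_step (hn : 1 ≤ n) (hadm : Admissible c)
    (hnz : ∀ i j, hcEven i → hcAdj i j → c i j ≠ 0)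
    {i : Fin n → Bool} (hi : hcEven i) {k l : Fin n} (hkl : k ≠ l) :
    ‖c i (hcFlip i k)‖
      = ‖c (hcFlip (hcFlip i k) l) (hcFlip (hcFlip (hcFlip i k) l) k)‖ := by
  set i₂ := hcFlip (hcFlip i k) l with hi₂
  have hi₂even : hcEven i₂ := (hcEven_flip' _ _).2 ((hcEven_flip i k).2 hi)
  have hflipi₂k : hcFlip i₂ k = hcFlip i l := by
    rw [hi₂, hcFlip_comm i hkl, hcFlip_flip]
  have hne : i ≠ i₂ := by
    intro he
    have : i k = i₂ k := by rw [← he]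
    rw [hi₂, hcFlip_ne _ hkl, hcFlip_self] at this
    simp at this
  have hjne : hcFlip i k ≠ hcFlip i l := hcFlip_injective i hkl
  -- notation for the four weights
  set α := c i (hcFlip i k)
  set β := c i (hcFlip i l)
  set γ := c i₂ (hcFlip i k)
  set δ := c i₂ (hcFlip i l)
  have hadjk : hcAdj i₂ (hcFlip i k) := by
    have : hcFlip i k = hcFlip i₂ l := by rw [hi₂, hcFlip_flip]
    rw [this]; exact hcAdj_flip i₂ l
  have hadjl : hcAdj i₂ (hcFlip i l) := by
    rw [← hflipi₂k]; exact hcAdj_flip i₂ k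
  have hα : α ≠ 0 := hnz _ _ hi (hcAdj_flip i k)
  have hβ : β ≠ 0 := hnz _ _ hi (hcAdj_flip i l)
  have hγ : γ ≠ 0 := hnz _ _ hi₂even hadjk
  have hδ : δ ≠ 0 := hnz _ _ hi₂even hadjl
  -- U equation
  have hU := hadm.2 i (even_inU c hn hnz hi) i₂ (even_inU c hn hnz hi₂even)
  rw [if_neg hne] at hU
  have hUfilter : Finset.univ.filter (fun j => ¬ hcEven j ∧ hcAdj i j ∧ hcAdj i₂ j)
      = {hcFlip i k, hcFlip i l} := filter_common_V i hi hkl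
  rw [hUfilter, Finset.sum_pair hjne] at hU
  -- hU : α * conj γ + β * conj δ = 0
  -- V equation
  have hj₁odd : ¬ hcEven (hcFlip i k) := (hcEven_flip i k).2 hi
  have hV := hadm.1 (hcFlip i k) (odd_inV c hn hnz hj₁odd) (hcFlip i l)
      (odd_inV c hn hnz ((hcEven_flip i l).2 hi))
  rw [if_neg hjne] at hV
  have hVfilter : Finset.univ.filter
      (fun i' => hcEven i' ∧ hcAdj i' (hcFlip i k) ∧ hcAdj i' (hcFlip i l))
      = {i, i₂} := by
    have h2 : hcFlip i l = hcFlip (hcFlip (hcFlip i k) k) l := by rw [hcFlip_flip]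
    rw [h2]
    rw [filter_common_U (hcFlip i k) hj₁odd hkl, hcFlip_flip]
  rw [hVfilter, Finset.sum_pair hne] at hV
  -- hV : α * conj β + γ * conj δ = 0
  -- deduce |α| = |δ|
  have e1 : ‖α‖ * ‖γ‖ = ‖β‖ * ‖δ‖ := by
    have : α * (starRingEnd ℂ) γ = -(β * (starRingEnd ℂ) δ) := by linear_combination hU
    calc ‖α‖ * ‖γ‖ = ‖α * (starRingEnd ℂ) γ‖ := by
          rw [norm_mul, Complex.norm_conj]
      _ = ‖β * (starRingEnd ℂ) δ‖ := by rw [this, norm_neg]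
      _ = ‖β‖ * ‖δ‖ := by rw [norm_mul, Complex.norm_conj]
  have e2 : ‖α‖ * ‖β‖ = ‖γ‖ * ‖δ‖ := by
    have : α * (starRingEnd ℂ) β = -(γ * (starRingEnd ℂ) δ) := by linear_combination hV
    calc ‖α‖ * ‖β‖ = ‖α * (starRingEnd ℂ) β‖ := by
          rw [norm_mul, Complex.norm_conj]
      _ = ‖γ * (starRingEnd ℂ) δ‖ := by rw [this, norm_neg]
      _ = ‖γ‖ * ‖δ‖ := by rw [norm_mul, Complex.norm_conj]
  have hbpos : 0 < ‖β‖ := norm_pos_iff.2 hβ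
  have hgpos : 0 < ‖γ‖ := norm_pos_iff.2 hγ
  have hsq : ‖α‖ ^ 2 * (‖β‖ * ‖γ‖)
      = ‖δ‖ ^ 2 * (‖β‖ * ‖γ‖) := by
    calc ‖α‖ ^ 2 * (‖β‖ * ‖γ‖)
        = (‖α‖ * ‖γ‖) * (‖α‖ * ‖β‖) := by ring
      _ = (‖β‖ * ‖δ‖) * (‖γ‖ * ‖δ‖) := by rw [e1, e2]
      _ = ‖δ‖ ^ 2 * (‖β‖ * ‖γ‖) := by ring
  have hsq' : ‖α‖ ^ 2 = ‖δ‖ ^ 2 :=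
    mul_right_cancel₀ (by positivity) hsq
  have : ‖α‖ = ‖δ‖ := by
    have h1 := Real.sqrt_sq (norm_nonneg α)
    have h2 := Real.sqrt_sq (norm_nonneg δ)
    rw [← h1, ← h2, hsq']
  rw [this, hflipi₂k]

/-- Double flip at `{a,b}` preserves all directional magnitudes. -/
lemma double_flip (hn : 1 ≤ n) (hadm : Admissible c)
    (hnz : ∀ i j, hcEven i → hcAdj i j → c i j ≠ 0)
    {x : Fin n → Bool} (hx : hcEven x) {a b : Fin n} (hab : a ≠ b) (k : Fin n) :
    ‖c x (hcFlip x k)‖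
      = ‖c (hcFlip (hcFlip x a) b) (hcFlip (hcFlip (hcFlip x a) b) k)‖ := by
  by_cases hka : k = a
  · subst hka
    exact key_step c hn hadm hnz hx hab
  by_cases hkb : k = b
  · subst hkb
    rw [hcFlip_comm x hab]
    exact key_step c hn hadm hnz hx (Ne.symm hab)
  · -- k ∉ {a, b}: go through two key steps
    have hstep1 := key_step c hn hadm hnz hx (hka : k ≠ a)
    have hzeven : hcEven (hcFlip (hcFlip x k) a) :=
      (hcEven_flip' _ _).2 ((hcEven_flip x k).2 hx)
    have hstep2 := key_step c hn hadm hnz hzeven (hkb : k ≠ b)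
    have hfinal : hcFlip (hcFlip (hcFlip (hcFlip x k) a) k) b = hcFlip (hcFlip x a) b := by
      rw [hcFlip_comm (hcFlip x k) (show a ≠ k from fun h => hka h.symm), hcFlip_flip]
    rw [hfinal] at hstep2
    rw [hstep1, hstep2]

end withC

lemma bool_ne_iff {p q : Bool} : p ≠ q ↔ q = !p := by
  cases p <;> cases q <;> simp

lemma diff_card_even {n : ℕ} {x y : Fin n → Bool} (hx : hcEven x) (hy : hcEven y) :
    (Finset.univ.filter (fun k => x k ≠ y k)).card % 2 = 0 := by
  have cast_iff : ∀ m : ℕ, m % 2 = 0 ↔ ((m : ZMod 2) = 0) := by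
    intro m
    rw [ZMod.natCast_eq_zero_iff]
    omega
  rw [cast_iff]
  have hterm : ∀ k : Fin n, ((if x k ≠ y k then 1 else 0 : ℕ) : ZMod 2)
      = ((if x k = true then 1 else 0 : ℕ) : ZMod 2)
        + ((if y k = true then 1 else 0 : ℕ) : ZMod 2) := by
    intro k
    cases hxk : x k <;> cases hyk : y k <;> simp [hxk, hyk] <;> decide
  rw [Finset.card_filter, Nat.cast_sum]
  calc (∑ k : Fin n, ((if x k ≠ y k then 1 else 0 : ℕ) : ZMod 2))
      = ∑ k : Fin n, (((if x k = true then 1 else 0 : ℕ) : ZMod 2)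
          + ((if y k = true then 1 else 0 : ℕ) : ZMod 2)) :=
        Finset.sum_congr rfl fun k _ => hterm k
    _ = (((Finset.univ.filter (fun k => x k = true)).card : ZMod 2))
          + (((Finset.univ.filter (fun k => y k = true)).card : ZMod 2)) := by
        rw [Finset.sum_add_distrib, Finset.card_filter, Finset.card_filter,
          Nat.cast_sum, Nat.cast_sum]
    _ = 0 := by
        rw [(cast_iff _).1 hx, (cast_iff _).1 hy, add_zero]

lemma transfer {n : ℕ} (c : (Fin n → Bool) → (Fin n → Bool) → ℂ)
    (hn : 1 ≤ n) (hadm : Admissible c)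
    (hnz : ∀ i j, hcEven i → hcAdj i j → c i j ≠ 0) :
    ∀ m : ℕ, ∀ x y : Fin n → Bool, hcEven x → hcEven y →
    (Finset.univ.filter (fun k => x k ≠ y k)).card = m →
    ∀ k, ‖c x (hcFlip x k)‖ = ‖c y (hcFlip y k)‖ := by
  intro m
  induction m using Nat.strong_induction_on with
  | _ m ih =>
    intro x y hx hy hcard k
    rcases Nat.eq_zero_or_pos m with h0 | hpos
    · have hxy : x = y := by
        funext a
        by_contra hne
        have ha : a ∈ Finset.univ.filter (fun k => x k ≠ y k) :=
          Finset.mem_filter.2 ⟨Finset.mem_univ a, hne⟩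
        have hzero : (Finset.univ.filter (fun k => x k ≠ y k)).card = 0 := by omega
        rw [Finset.card_eq_zero.1 hzero] at ha
        exact absurd ha (Finset.notMem_empty a)
      rw [hxy]
    · have hm2 : 2 ≤ m := by
        have hpar := diff_card_even hx hy
        rw [hcard] at hpar
        omega
      set D := Finset.univ.filter (fun k => x k ≠ y k) with hD
      obtain ⟨a, ha⟩ : D.Nonempty := Finset.card_pos.1 (by rw [hcard]; omega)
      obtain ⟨b, hbmem⟩ : (D.erase a).Nonempty :=
        Finset.card_pos.1 (by rw [Finset.card_erase_of_mem ha, hcard]; omega)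
      have hba : b ≠ a := (Finset.mem_erase.1 hbmem).1
      have hbD : b ∈ D := (Finset.mem_erase.1 hbmem).2
      have hab : a ≠ b := fun h => hba h.symm
      have haD' : x a ≠ y a := by
        have := Finset.mem_filter.1 (hD ▸ ha); exact this.2
      have hbD' : x b ≠ y b := by
        have := Finset.mem_filter.1 (hD ▸ hbD); exact this.2
      set x' := hcFlip (hcFlip x a) b with hx'def
      have hx' : hcEven x' := (hcEven_flip' _ _).2 ((hcEven_flip x a).2 hx)
      have hxa' : x' a = y a := by
        rw [hx'def, hcFlip_ne _ hab, hcFlip_self, ← bool_ne_iff.1 haD']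
      have hxb' : x' b = y b := by
        rw [hx'def, hcFlip_self, hcFlip_ne _ hba, ← bool_ne_iff.1 hbD']
      have hxm' : ∀ m', m' ≠ a → m' ≠ b → x' m' = x m' := by
        intro m' h1 h2
        rw [hx'def, hcFlip_ne _ h2, hcFlip_ne _ h1]
      have hD' : Finset.univ.filter (fun m' => x' m' ≠ y m') = (D.erase b).erase a := by
        ext m'
        simp only [Finset.mem_filter, Finset.mem_univ, true_and, Finset.mem_erase]
        constructor
        · intro hm'
          have h1 : m' ≠ a := fun h => hm' (h ▸ hxa')
          have h2 : m' ≠ b := fun h => hm' (h ▸ hxb')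
          rw [hxm' m' h1 h2] at hm'
          exact ⟨h1, h2, Finset.mem_filter.2 ⟨Finset.mem_univ _, hm'⟩⟩
        · rintro ⟨h1, h2, h3⟩
          rw [hxm' m' h1 h2]
          exact (Finset.mem_filter.1 h3).2
      have hcard' : ((D.erase b).erase a).card = m - 2 := by
        have haeb : a ∈ D.erase b := Finset.mem_erase.2 ⟨hab, ha⟩
        rw [Finset.card_erase_of_mem haeb, Finset.card_erase_of_mem hbD, hcard]
        omega
      have hIH := ih (m - 2) (by omega) x' y hx' hy (by rw [hD', hcard']) k
      rw [← hIH]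
      exact double_flip c hn hadm hnz hx hab k

/-- Let `c` be a nowhere-vanishing admissible edge weighting of
`Q_n`.  Then there is a point `t = (t_0, …, t_{n-1})` of the standard simplex
`Δ_{n-1}` such that `|c({i, i#k})| = √(t_k)` for every even vertex `i` and every
`k < n`. -/
theorem nonvanishing_admissible_abs {n : ℕ} (hn : 1 ≤ n)
    (c : (Fin n → Bool) → (Fin n → Bool) → ℂ) (hadm : Admissible c)
    (hnz : ∀ i j, hcEven i → hcAdj i j → c i j ≠ 0) :
    ∃ t : Fin n → ℝ, (∀ k, 0 ≤ t k) ∧ (∑ k, t k = 1) ∧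
      ∀ (i : Fin n → Bool) (k : Fin n), hcEven i →
        ‖c i (hcFlip i k)‖ = Real.sqrt (t k) := by
  set i₀ : Fin n → Bool := fun _ => false with hi₀def
  have hi₀ : hcEven i₀ := by
    unfold hcEven
    simp [hi₀def]
  set t : Fin n → ℝ := fun k => ‖c i₀ (hcFlip i₀ k)‖ ^ 2 with htdef
  refine ⟨t, fun k => sq_nonneg _, ?_, ?_⟩
  · -- sum equals 1
    have hU := hadm.2 i₀ (even_inU c hn hnz hi₀) i₀ (even_inU c hn hnz hi₀)
    rw [if_pos rfl] at hU
    have hfilter : Finset.univ.filter (fun j => ¬ hcEven j ∧ hcAdj i₀ j ∧ hcAdj i₀ j)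
        = Finset.univ.image (hcFlip i₀) := by
      ext j
      simp only [Finset.mem_filter, Finset.mem_univ, true_and, Finset.mem_image]
      constructor
      · rintro ⟨_, hadj, _⟩
        obtain ⟨k, rfl⟩ := hcAdj_iff.1 hadj
        exact ⟨k, rfl⟩
      · rintro ⟨k, _, rfl⟩
        exact ⟨(hcEven_flip i₀ k).2 hi₀, hcAdj_flip i₀ k, hcAdj_flip i₀ k⟩
    rw [hfilter] at hU
    rw [Finset.sum_image (fun k _ l _ h => by
      by_contra hne
      exact hcFlip_injective i₀ hne h)] at hU
    have hterm : ∀ k : Fin n, c i₀ (hcFlip i₀ k) * (starRingEnd ℂ) (c i₀ (hcFlip i₀ k))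
        = ((t k : ℝ) : ℂ) := by
      intro k
      rw [Complex.mul_conj]
      norm_cast
      show Complex.normSq _ = ‖c i₀ (hcFlip i₀ k)‖ ^ 2
      rw [Complex.sq_norm]
    rw [Finset.sum_congr rfl (fun k _ => hterm k)] at hU
    rw [← Complex.ofReal_sum] at hU
    exact_mod_cast hU
  · intro i k hi
    have htk : Real.sqrt (t k) = ‖c i₀ (hcFlip i₀ k)‖ := by
      rw [htdef]
      exact Real.sqrt_sq (norm_nonneg _)
    rw [htk]
    exact transfer c hn hadm hnz _ i i₀ hi hi₀ rfl k
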